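/- arXiv:2107.07098 — 7 statements merged into one kernel-verified Lean document; each statement's English description precedes it below -/
import Mathlib

section
/- Let p ∈ ℕ and a > 0. Define the Matérn kernel of half-integer order ν = p + 1/2 with decay rate a by m_p(τ; a) = e^{−a|τ|} · (p!/(2p)!) · Σ_{i=0}^{p} ((p+i)!/(i!(p−i)!)) (2a|τ|)^{p−i}. Then for every ω ∈ ℝ, its Fourier transform satisfies ∫_ℝ m_p(τ; a) e^{−iωτ} dτ = (2a)^{2p+1} (p!)² / (2p)! · (ω² + a²)^{−(p+1)}. -/
/-!
On each half-line `|τ|^k e^{-a|τ|} e^{-iωτ}` is a Laplace integrand, so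
`∫ |τ|^k e^{-a|τ|} e^{-iωτ} dτ = k!/z^{k+1} + k!/w^{k+1}` with `z = a + iω`, `w = a - iω`.
Summing over the terms of the kernel and putting `x = z/(2a)`, `y = w/(2a)`, so that `x + y = 1`,
the claim becomes `y^{p+1} G_p(x) + x^{p+1} G_p(y) = 1` for the truncation `G_p` of
`(1 - x)^{-(p+1)} = ∑ C(p+i, i) x^i`: the two ways a best-of-`(2p+1)` series can end.
Multiplying `G_{p+1}` by `1 - x = y` telescopes to `G_p` up to two boundary terms, which cancel
between the two summands, so the identity follows by induction on `p`.
-/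

open MeasureTheory Real

/-- The Matérn kernel of half-integer order `ν = p + 1/2` with decay rate `a`. -/
noncomputable def maternKernel (p : ℕ) (a : ℝ) (τ : ℝ) : ℝ :=
  Real.exp (-a * |τ|) * ((p.factorial : ℝ) / ((2 * p).factorial : ℝ)) *
    ∑ i ∈ Finset.range (p + 1),
      (((p + i).factorial : ℝ) / ((i.factorial : ℝ) * ((p - i).factorial : ℝ))) *
        (2 * a * |τ|) ^ (p - i)

open Set Filter Topology
open scoped Complex

section NegBinomial

open Finset

variable {R : Type*} [CommRing R]

/-- The degree-`p` truncation of `(1 - x)⁻¹ ^ (p + 1) = ∑ i, (p + i).choose i * x ^ i`. -/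
def negBinomialTrunc (p : ℕ) (x : R) : R :=
  ∑ i ∈ range (p + 1), ((p + i).choose i : R) * x ^ i

theorem one_sub_mul_negBinomialTrunc_succ (p : ℕ) (x : R) :
    (1 - x) * negBinomialTrunc (p + 1) x
      = negBinomialTrunc p x + ((2 * p + 1).choose (p + 1) : R) * x ^ (p + 1)
        - 2 * ((2 * p + 1).choose (p + 1) : R) * x ^ (p + 2) := by
  unfold negBinomialTrunc
  have hshift : ∑ i ∈ range (p + 1 + 1), ((p + 1 + i).choose i : R) * x ^ i
      = 1 + ∑ i ∈ range (p + 1), ((p + 1 + i).choose i : R) * x ^ (i + 1)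
        + ∑ i ∈ range (p + 1), ((p + (i + 1)).choose (i + 1) : R) * x ^ (i + 1) := by
    rw [sum_range_succ', add_assoc (1 : R), ← sum_add_distrib, add_comm (1 : R)]
    congr 1
    · refine sum_congr rfl fun i _ => ?_
      rw [show p + 1 + (i + 1) = (p + 1 + i) + 1 by ring, Nat.choose_succ_succ',
        show p + 1 + i = p + (i + 1) by ring]
      push_cast
      ring
    · simp
  have hmul : x * ∑ i ∈ range (p + 1 + 1), ((p + 1 + i).choose i : R) * x ^ i
      = ∑ i ∈ range (p + 1), ((p + 1 + i).choose i : R) * x ^ (i + 1)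
        + 2 * ((2 * p + 1).choose (p + 1) : R) * x ^ (p + 2) := by
    have hcentral : (p + 1 + (p + 1)).choose (p + 1) = 2 * (2 * p + 1).choose (p + 1) := by
      rw [show p + 1 + (p + 1) = 2 * p + 1 + 1 by ring, Nat.choose_succ_succ',
        ← Nat.choose_symm_half]
      ring
    rw [mul_sum, sum_range_succ, hcentral]
    push_cast
    congr 1
    · exact sum_congr rfl fun i _ => by ring
    · ring
  have hextend : ∑ i ∈ range (p + 1), ((p + i).choose i : R) * x ^ i
      + ((2 * p + 1).choose (p + 1) : R) * x ^ (p + 1)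
      = 1 + ∑ i ∈ range (p + 1), ((p + (i + 1)).choose (i + 1) : R) * x ^ (i + 1) := by
    rw [show 2 * p + 1 = p + (p + 1) by ring,
      ← sum_range_succ (fun i => ((p + i).choose i : R) * x ^ i), sum_range_succ']
    simp [add_comm]
  linear_combination hshift - hmul - hextend

theorem pow_mul_negBinomialTrunc_add_pow_mul_negBinomialTrunc (p : ℕ) {x y : R}
    (h : x + y = 1) :
    y ^ (p + 1) * negBinomialTrunc p x + x ^ (p + 1) * negBinomialTrunc p y = 1 := by
  induction p with
  | zero => simpa [negBinomialTrunc, add_comm] using h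
  | succ p ih =>
    have hx := one_sub_mul_negBinomialTrunc_succ p x
    have hy := one_sub_mul_negBinomialTrunc_succ p y
    rw [show 1 - x = y by linear_combination -h] at hx
    rw [show 1 - y = x by linear_combination -h] at hy
    linear_combination y ^ (p + 1) * hx + x ^ (p + 1) * hy + ih
      - 2 * ((2 * p + 1).choose (p + 1) : R) * (x * y) ^ (p + 1) * h

end NegBinomial

section Laplace

variable {z : ℂ}

theorem norm_pow_mul_cexp_neg_mul (k : ℕ) (z : ℂ) {t : ℝ} (ht : 0 ≤ t) :
    ‖(t : ℂ) ^ k * cexp (-(z * t))‖ = t ^ k * rexp (-z.re * t) := by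
  rw [norm_mul, norm_pow, Complex.norm_exp, Complex.norm_real, Real.norm_of_nonneg ht]
  simp [Complex.mul_re]

theorem integrableOn_Ioi_pow_mul_cexp_neg_mul (k : ℕ) (hz : 0 < z.re) :
    IntegrableOn (fun t : ℝ => (t : ℂ) ^ k * cexp (-(z * t))) (Ioi 0) := by
  have hreal : IntegrableOn (fun t : ℝ => t ^ (k : ℝ) * rexp (-z.re * t ^ (1 : ℝ))) (Ioi 0) :=
    integrableOn_rpow_mul_exp_neg_mul_rpow (by linarith [k.cast_nonneg (α := ℝ)]) one_pos hz
  refine hreal.mono' (Continuous.aestronglyMeasurable (by fun_prop)) ?_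
  filter_upwards [ae_restrict_mem measurableSet_Ioi] with t ht
  rw [norm_pow_mul_cexp_neg_mul k z (le_of_lt ht), rpow_natCast, rpow_one]

theorem tendsto_pow_mul_cexp_neg_mul_atTop (k : ℕ) (hz : 0 < z.re) :
    Tendsto (fun t : ℝ => (t : ℂ) ^ k * cexp (-(z * t))) atTop (𝓝 0) := by
  rw [tendsto_zero_iff_norm_tendsto_zero]
  refine (tendsto_rpow_mul_exp_neg_mul_atTop_nhds_zero k z.re hz).congr' ?_
  filter_upwards [eventually_ge_atTop 0] with t ht
  rw [norm_pow_mul_cexp_neg_mul k z ht, rpow_natCast]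

theorem integral_Ioi_pow_succ_mul_cexp_neg_mul (k : ℕ) (hz : 0 < z.re) :
    ∫ t in Ioi (0 : ℝ), (t : ℂ) ^ (k + 1) * cexp (-(z * t))
      = (k + 1) / z * ∫ t in Ioi (0 : ℝ), (t : ℂ) ^ k * cexp (-(z * t)) := by
  have hz0 : z ≠ 0 := by rintro rfl; simp at hz
  have hderiv : ∀ t ∈ Ici (0 : ℝ),
      HasDerivAt (fun t : ℝ => -((t : ℂ) ^ (k + 1) * cexp (-(z * t))) / z)
        ((t : ℂ) ^ (k + 1) * cexp (-(z * t)) - (k + 1) / z * ((t : ℂ) ^ k * cexp (-(z * t)))) t := by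
    intro t _
    refine HasDerivAt.comp_ofReal (e := fun u : ℂ => -(u ^ (k + 1) * cexp (-(z * u))) / z) ?_
    refine ((((hasDerivAt_pow (k + 1) (t : ℂ)).mul
      ((hasDerivAt_id' (t : ℂ)).const_mul z).neg.cexp).neg).div_const z).congr_deriv ?_
    simp only [Pi.neg_apply]
    push_cast
    field_simp
    ring
  have hint₁ := integrableOn_Ioi_pow_mul_cexp_neg_mul (k + 1) hz
  have hint₀ := (integrableOn_Ioi_pow_mul_cexp_neg_mul k hz).const_mul ((k + 1) / z)
  have hlim := (tendsto_pow_mul_cexp_neg_mul_atTop (k + 1) hz).neg.div_const z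
  rw [neg_zero, zero_div] at hlim
  have h := integral_Ioi_of_hasDerivAt_of_tendsto' hderiv (hint₁.sub hint₀) hlim
  rw [integral_sub hint₁ hint₀, integral_const_mul] at h
  simpa [sub_eq_zero] using h

theorem integral_Ioi_pow_mul_cexp_neg_mul (k : ℕ) (hz : 0 < z.re) :
    ∫ t in Ioi (0 : ℝ), (t : ℂ) ^ k * cexp (-(z * t)) = k.factorial / z ^ (k + 1) := by
  have hz0 : z ≠ 0 := by rintro rfl; simp at hz
  induction k with
  | zero => simpa [neg_mul] using integral_exp_mul_complex_Ioi (a := -z) (by simpa) 0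
  | succ k ih =>
    rw [integral_Ioi_pow_succ_mul_cexp_neg_mul k hz, ih, Nat.factorial_succ]
    push_cast
    field_simp
    ring

end Laplace

section HalfLines

variable {E : Type*} [NormedAddCommGroup E] {f : ℝ → E}

theorem integrable_of_integrableOn_Ioi_of_comp_neg (hpos : IntegrableOn f (Ioi 0))
    (hneg : IntegrableOn (fun t => f (-t)) (Ioi 0)) : Integrable f := by
  have hIic : IntegrableOn f (Iic 0) := by
    rw [← (Measure.measurePreserving_neg (volume : Measure ℝ)).integrableOn_comp_preimage
      (Homeomorph.neg ℝ).measurableEmbedding, neg_preimage, neg_Iic, neg_zero,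
      integrableOn_Ici_iff_integrableOn_Ioi]
    exact hneg
  simpa using hIic.union hpos

theorem integral_eq_integral_Ioi_add_integral_Ioi_comp_neg [NormedSpace ℝ E]
    (hf : Integrable f) : ∫ t, f t = (∫ t in Ioi 0, f t) + ∫ t in Ioi 0, f (-t) := by
  rw [integral_comp_neg_Ioi, neg_zero, add_comm,
    intervalIntegral.integral_Iic_add_Ioi hf.integrableOn hf.integrableOn]

end HalfLines

section Fourier

open Complex

variable (k : ℕ) (ω : ℝ)

theorem abs_pow_mul_exp_mul_cexp_of_nonneg (a : ℝ) {t : ℝ} (ht : 0 ≤ t) :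
    ((|t| ^ k * rexp (-a * |t|) : ℝ) : ℂ) * cexp (-I * ω * t)
      = (t : ℂ) ^ k * cexp (-((a + I * ω) * t)) := by
  rw [abs_of_nonneg ht]
  push_cast
  rw [mul_assoc, ← Complex.exp_add]
  ring_nf

theorem abs_pow_mul_exp_mul_cexp_comp_neg (a t : ℝ) :
    ((|-t| ^ k * rexp (-a * |-t|) : ℝ) : ℂ) * cexp (-I * ω * ↑(-t))
      = ((|t| ^ k * rexp (-a * |t|) : ℝ) : ℂ) * cexp (-I * ↑(-ω) * t) := by
  rw [abs_neg]
  push_cast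
  ring_nf

theorem integrableOn_Ioi_abs_pow_mul_exp_mul_cexp {a : ℝ} (ha : 0 < a) :
    IntegrableOn (fun τ : ℝ => ((|τ| ^ k * rexp (-a * |τ|) : ℝ) : ℂ) * cexp (-I * ω * τ))
      (Ioi 0) :=
  (integrableOn_Ioi_pow_mul_cexp_neg_mul k (by simpa using ha)).congr_fun
    (fun _ ht => (abs_pow_mul_exp_mul_cexp_of_nonneg k ω a (le_of_lt ht)).symm) measurableSet_Ioi

theorem integral_Ioi_abs_pow_mul_exp_mul_cexp {a : ℝ} (ha : 0 < a) :
    ∫ τ in Ioi (0 : ℝ), ((|τ| ^ k * rexp (-a * |τ|) : ℝ) : ℂ) * cexp (-I * ω * τ)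
      = k.factorial / (a + I * ω) ^ (k + 1) := by
  rw [setIntegral_congr_fun measurableSet_Ioi
    (fun _ ht => abs_pow_mul_exp_mul_cexp_of_nonneg k ω a (le_of_lt ht))]
  exact integral_Ioi_pow_mul_cexp_neg_mul k (by simpa using ha)

theorem integrable_abs_pow_mul_exp_mul_cexp {a : ℝ} (ha : 0 < a) :
    Integrable fun τ : ℝ => ((|τ| ^ k * rexp (-a * |τ|) : ℝ) : ℂ) * cexp (-I * ω * τ) :=
  integrable_of_integrableOn_Ioi_of_comp_neg (integrableOn_Ioi_abs_pow_mul_exp_mul_cexp k ω ha)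
    (by simpa only [abs_pow_mul_exp_mul_cexp_comp_neg]
      using integrableOn_Ioi_abs_pow_mul_exp_mul_cexp k (-ω) ha)

theorem integral_abs_pow_mul_exp_mul_cexp {a : ℝ} (ha : 0 < a) :
    ∫ τ : ℝ, ((|τ| ^ k * rexp (-a * |τ|) : ℝ) : ℂ) * cexp (-I * ω * τ)
      = k.factorial / (a + I * ω) ^ (k + 1) + k.factorial / (a - I * ω) ^ (k + 1) := by
  rw [integral_eq_integral_Ioi_add_integral_Ioi_comp_neg
    (integrable_abs_pow_mul_exp_mul_cexp k ω ha)]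
  simp only [abs_pow_mul_exp_mul_cexp_comp_neg, integral_Ioi_abs_pow_mul_exp_mul_cexp k _ ha]
  push_cast
  ring_nf

end Fourier

section PartialFractions

open Finset Nat

variable {K : Type*} [Field K] [CharZero K]

theorem sum_matern_coeff_mul_partial_fractions (p : ℕ) {s z w : K} (hs : s ≠ 0) (hz : z ≠ 0)
    (hw : w ≠ 0) (hzw : z + w = s) :
    ∑ i ∈ range (p + 1), (p ! / (2 * p)! * ((p + i)! / (i ! * (p - i)!)) * s ^ (p - i))
        * ((p - i)! / z ^ (p - i + 1) + (p - i)! / w ^ (p - i + 1))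
      = s ^ (2 * p + 1) * p ! ^ 2 / (2 * p)! * ((z * w) ^ (p + 1))⁻¹ := by
  have hterm : ∀ i ∈ range (p + 1),
      (p ! / (2 * p)! * ((p + i)! / (i ! * (p - i)!)) * s ^ (p - i))
        * ((p - i)! / z ^ (p - i + 1) + (p - i)! / w ^ (p - i + 1))
      = s ^ (2 * p + 1) * p ! ^ 2 / (2 * p)! * ((z * w) ^ (p + 1))⁻¹
        * ((w / s) ^ (p + 1) * (((p + i).choose i : K) * (z / s) ^ i)
          + (z / s) ^ (p + 1) * (((p + i).choose i : K) * (w / s) ^ i)) := by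
    intro i hi
    obtain ⟨j, rfl⟩ := Nat.exists_eq_add_of_le' (Nat.lt_succ_iff.mp (mem_range.mp hi))
    rw [Nat.add_sub_cancel, ← Nat.add_choose_mul_factorial_mul_factorial (j + i) i]
    push_cast
    simp only [div_pow]
    field_simp [Nat.factorial_ne_zero]
    ring
  have hone := pow_mul_negBinomialTrunc_add_pow_mul_negBinomialTrunc p (x := z / s) (y := w / s)
    (by rw [← add_div, hzw, div_self hs])
  unfold negBinomialTrunc at hone
  rw [sum_congr rfl hterm, ← mul_sum, sum_add_distrib, ← mul_sum, ← mul_sum, hone, mul_one]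

end PartialFractions

open Complex Finset in
/-- The Fourier transform of the half-integer Matérn kernel is
`(2a)^{2p+1} (p!)² / (2p)! · (ω² + a²)^{-(p+1)}`. -/
theorem fourier_matern (p : ℕ) (a : ℝ) (ha : 0 < a) (ω : ℝ) :
    ∫ τ : ℝ, (maternKernel p a τ : ℂ) * Complex.exp (-Complex.I * ω * τ)
      = (((2 * a) ^ (2 * p + 1) * (p.factorial : ℝ) ^ 2 / ((2 * p).factorial : ℝ) *
          ((ω ^ 2 + a ^ 2) ^ (p + 1))⁻¹ : ℝ) : ℂ) := by
  have hexpand : (fun τ : ℝ => (maternKernel p a τ : ℂ) * cexp (-I * ω * τ))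
      = fun τ => ∑ i ∈ range (p + 1),
          ((p.factorial : ℂ) / (2 * p).factorial
              * ((p + i).factorial / (i.factorial * (p - i).factorial)) * (2 * a) ^ (p - i))
            * (((|τ| ^ (p - i) * rexp (-a * |τ|) : ℝ) : ℂ) * cexp (-I * ω * τ)) := by
    ext τ
    simp only [maternKernel, mul_pow]
    push_cast
    rw [mul_sum, sum_mul]
    exact sum_congr rfl fun i _ => by ring
  have hz : (a + I * ω : ℂ) ≠ 0 := fun h => by simpa [ha.ne'] using congrArg re h
  have hw : (a - I * ω : ℂ) ≠ 0 := fun h => by simpa [ha.ne'] using congrArg re h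
  have hzw : (a + I * ω) * (a - I * ω) = ((ω ^ 2 + a ^ 2 : ℝ) : ℂ) := by
    push_cast
    linear_combination (-(ω : ℂ) ^ 2) * I_sq
  rw [hexpand, integral_finsetSum _ fun i _ =>
    (integrable_abs_pow_mul_exp_mul_cexp (p - i) ω ha).const_mul _]
  simp only [integral_const_mul, integral_abs_pow_mul_exp_mul_cexp _ ω ha]
  rw [sum_matern_coeff_mul_partial_fractions p (by simpa using ha.ne') hz hw (by ring), hzw]
  push_cast
  ring
end

section
/- Let p ∈ ℕ, a > 0, b ∈ ℝ. The Hida-Matérn kernel k_{H,p}(τ; a, b) = cos(bτ) · m_p(τ; a) is a positive-definite function on ℝ: for every n ∈ ℕ, every choice of points t₁, …, tₙ ∈ ℝ, and every choice of real coefficients c₁, …, cₙ, we have Σ_{i=1}^{n} Σ_{j=1}^{n} c_i c_j k_{H,p}(t_i − t_j; a, b) ≥ 0. -/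
/-!
Up to the factor `(2a)^(2p+1) / (2p)!`, the Matérn kernel is the autocorrelation
`τ ↦ ∫ f(u) f(u + τ) du` of `f(u) = u^p e^(-au) 1_{u ≥ 0}`: expanding `(u + τ)^p` binomially
reduces the integral to Gamma integrals. Autocorrelations of square-integrable functions are
positive definite, since `∑ cᵢ cⱼ ∫ f(v - tᵢ) f(v - tⱼ) dv = ∫ (∑ cᵢ f(v - tᵢ))² dv`. Finally
`cos (b(s - t)) = cos bs cos bt + sin bs sin bt` splits the quadratic form of `cos (bτ) k(τ)` into
two quadratic forms of `k`.
-/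

open MeasureTheory Real

/-- The Hida-Matérn kernel with smoothness `p`, inverse length-scale `a`,
and frequency shift `b`. -/
noncomputable def hidaMaternKernel (p : ℕ) (a b : ℝ) (τ : ℝ) : ℝ :=
  Real.cos (b * τ) * maternKernel p a τ

open Set
open scoped Nat

/-- Positive definiteness in the sense of Bochner: the quadratic forms are only required to be
nonnegative. -/
def IsPosDefFun {G : Type*} [AddGroup G] (k : G → ℝ) : Prop :=
  ∀ (n : ℕ) (t : Fin n → G) (c : Fin n → ℝ), 0 ≤ ∑ i, ∑ j, c i * c j * k (t i - t j)

namespace IsPosDefFun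

variable {G : Type*} [AddGroup G] {k : G → ℝ}

theorem const_mul (hk : IsPosDefFun k) {C : ℝ} (hC : 0 ≤ C) : IsPosDefFun fun τ => C * k τ := by
  intro n t c
  simpa only [Finset.mul_sum, mul_left_comm C] using mul_nonneg hC (hk n t c)

theorem cos_mul {k : ℝ → ℝ} (hk : IsPosDefFun k) (b : ℝ) :
    IsPosDefFun fun τ => cos (b * τ) * k τ := by
  intro n t c
  refine (add_nonneg (hk n t fun i => c i * cos (b * t i))
    (hk n t fun i => c i * sin (b * t i))).trans_eq ?_
  rw [← Finset.sum_add_distrib]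
  refine Finset.sum_congr rfl fun i _ => ?_
  rw [← Finset.sum_add_distrib]
  refine Finset.sum_congr rfl fun j _ => ?_
  dsimp only
  rw [mul_sub, cos_sub]
  ring

end IsPosDefFun

section Autocorrelation

variable {G : Type*} [AddGroup G] [MeasurableSpace G] [MeasurableAdd G]
  (μ : Measure G) [μ.IsAddRightInvariant]

noncomputable def autocorrelation (f : G → ℝ) (τ : G) : ℝ :=
  ∫ u, f u * f (u + τ) ∂μ

theorem autocorrelation_neg (f : G → ℝ) (τ : G) :
    autocorrelation μ f (-τ) = autocorrelation μ f τ := by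
  rw [autocorrelation, ← integral_add_right_eq_self (fun u => f u * f (u + -τ)) τ]
  simp only [add_neg_cancel_right]
  exact integral_congr_ae (ae_of_all _ fun u => mul_comm _ _)

theorem autocorrelation_sub_eq_integral (f : G → ℝ) (s t : G) :
    autocorrelation μ f (s - t) = ∫ v, f (v - s) * f (v - t) ∂μ := by
  rw [autocorrelation, ← integral_add_right_eq_self (fun v => f (v - s) * f (v - t)) s]
  congr 1 with x
  rw [add_sub_cancel_right, add_sub_assoc]

theorem isPosDefFun_autocorrelation {f : G → ℝ} (hf : MemLp f 2 μ) :
    IsPosDefFun (autocorrelation μ f) := by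
  intro n t c
  have hshift : ∀ s, MemLp (fun v => f (v - s)) 2 μ := fun s =>
    hf.comp_measurePreserving (measurePreserving_sub_right μ s)
  have hint : ∀ i j, Integrable (fun v => c i * c j * (f (v - t i) * f (v - t j))) μ :=
    fun i j => ((hshift (t i)).integrable_mul (hshift (t j))).const_mul _
  calc 0 ≤ ∫ v, (∑ i, c i * f (v - t i)) ^ 2 ∂μ := integral_nonneg fun v => sq_nonneg _
    _ = ∑ i, ∑ j, c i * c j * autocorrelation μ f (t i - t j) := by
      have hrow : ∀ i, ∑ j, c i * c j * autocorrelation μ f (t i - t j) =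
          ∫ v, ∑ j, c i * c j * (f (v - t i) * f (v - t j)) ∂μ := fun i => by
        simp only [autocorrelation_sub_eq_integral, ← integral_const_mul]
        exact (integral_finsetSum _ fun j _ => hint i j).symm
      simp only [hrow]
      rw [← integral_finsetSum _ fun i _ => integrable_finsetSum _ fun j _ => hint i j]
      refine integral_congr_ae (ae_of_all _ fun v => ?_)
      simp only [sq, Finset.sum_mul_sum]
      exact Finset.sum_congr rfl fun i _ => Finset.sum_congr rfl fun j _ => by ring

end Autocorrelation

theorem autocorrelation_abs {f : ℝ → ℝ} (τ : ℝ) :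
    autocorrelation volume f |τ| = autocorrelation volume f τ := by
  rcases abs_choice τ with h | h <;> rw [h]
  exact autocorrelation_neg volume f τ

theorem integrableOn_pow_mul_exp_neg_mul_Ioi (n : ℕ) {c : ℝ} (hc : 0 < c) :
    IntegrableOn (fun u : ℝ => u ^ n * exp (-(c * u))) (Ioi 0) := by
  refine (integrableOn_rpow_mul_exp_neg_mul_rpow (s := n) (p := 1)
    (neg_one_lt_zero.trans_le n.cast_nonneg) one_pos hc).congr_fun (fun u _ => ?_) measurableSet_Ioi
  simp only [rpow_natCast, rpow_one, neg_mul]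

theorem integral_pow_mul_exp_neg_mul_Ioi (n : ℕ) {c : ℝ} (hc : 0 < c) :
    ∫ u in Ioi (0 : ℝ), u ^ n * exp (-(c * u)) = n ! / c ^ (n + 1) := by
  have h := integral_rpow_mul_exp_neg_mul_Ioi (a := (n : ℝ) + 1) (by positivity) hc
  rw [Real.Gamma_nat_eq_factorial, add_sub_cancel_right, ← Nat.cast_succ, rpow_natCast,
    div_pow, one_pow] at h
  simp only [rpow_natCast] at h
  rw [h, one_div_mul_eq_div]

noncomputable def maternFeature (p : ℕ) (a : ℝ) : ℝ → ℝ :=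
  (Ici 0).indicator fun u => u ^ p * exp (-(a * u))

section Matern

variable {p : ℕ} {a : ℝ}

theorem maternFeature_mul_maternFeature_add {w : ℝ} (hw : 0 ≤ w) :
    (fun u => maternFeature p a u * maternFeature p a (u + w)) =
      (Ici 0).indicator fun u => ∑ j ∈ Finset.range (p + 1),
        p.choose j * w ^ (p - j) * exp (-(a * w)) * (u ^ (p + j) * exp (-(2 * a * u))) := by
  ext u
  by_cases hu : 0 ≤ u
  · have huw : 0 ≤ u + w := by linarith
    simp only [maternFeature, indicator_of_mem (mem_Ici.2 hu), indicator_of_mem (mem_Ici.2 huw),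
      add_pow, Finset.mul_sum, Finset.sum_mul]
    refine Finset.sum_congr rfl fun j _ => ?_
    have hexp : exp (-(a * u)) * exp (-(a * (u + w))) = exp (-(a * w)) * exp (-(2 * a * u)) := by
      rw [← exp_add, ← exp_add]; ring_nf
    rw [pow_add]
    linear_combination u ^ p * u ^ j * w ^ (p - j) * (p.choose j : ℝ) * hexp
  · simp [maternFeature, hu]

theorem integrable_maternFeature_mul_add (ha : 0 < a) {w : ℝ} (hw : 0 ≤ w) :
    Integrable fun u => maternFeature p a u * maternFeature p a (u + w) := by
  rw [maternFeature_mul_maternFeature_add hw, integrable_indicator_iff measurableSet_Ici,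
    integrableOn_Ici_iff_integrableOn_Ioi]
  exact integrable_finsetSum _ fun j _ =>
    (integrableOn_pow_mul_exp_neg_mul_Ioi (p + j) (by positivity)).const_mul _

theorem memLp_maternFeature (ha : 0 < a) : MemLp (maternFeature p a) 2 := by
  have hmeas : Measurable (maternFeature p a) :=
    (by fun_prop : Measurable _).indicator measurableSet_Ici
  rw [memLp_two_iff_integrable_sq hmeas.aestronglyMeasurable]
  simpa [sq] using integrable_maternFeature_mul_add (p := p) ha le_rfl

theorem autocorrelation_maternFeature (ha : 0 < a) {w : ℝ} (hw : 0 ≤ w) :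
    autocorrelation volume (maternFeature p a) w = ∑ j ∈ Finset.range (p + 1),
      p.choose j * w ^ (p - j) * exp (-(a * w)) * ((p + j)! / (2 * a) ^ (p + j + 1)) := by
  have h2a : 0 < 2 * a := by positivity
  rw [autocorrelation, maternFeature_mul_maternFeature_add hw,
    integral_indicator measurableSet_Ici, integral_Ici_eq_integral_Ioi,
    integral_finsetSum _ fun j _ => (integrableOn_pow_mul_exp_neg_mul_Ioi (p + j) h2a).const_mul _]
  simp only [integral_const_mul, integral_pow_mul_exp_neg_mul_Ioi _ h2a]

theorem maternKernel_eq_mul_autocorrelation (ha : 0 < a) (τ : ℝ) :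
    maternKernel p a τ =
      (2 * a) ^ (2 * p + 1) / (2 * p)! * autocorrelation volume (maternFeature p a) τ := by
  rw [← autocorrelation_abs, autocorrelation_maternFeature ha (abs_nonneg τ), maternKernel,
    Finset.mul_sum, Finset.mul_sum]
  refine Finset.sum_congr rfl fun i hi => ?_
  have hi : i ≤ p := Nat.lt_succ_iff.mp (Finset.mem_range.mp hi)
  have hpow : (2 * a) ^ (2 * p + 1) = (2 * a) ^ (p - i) * (2 * a) ^ (p + i + 1) := by
    rw [← pow_add]; congr 1; omega
  rw [Nat.cast_choose ℝ hi, mul_pow, hpow, neg_mul]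
  field_simp

end Matern

/-- The Hida-Matérn kernel is a positive-definite function on `ℝ`. -/
theorem hidaMatern_posDef (p : ℕ) (a b : ℝ) (ha : 0 < a) :
    ∀ (n : ℕ) (t : Fin n → ℝ) (c : Fin n → ℝ),
      0 ≤ ∑ i : Fin n, ∑ j : Fin n, c i * c j * hidaMaternKernel p a b (t i - t j) := by
  have hk : hidaMaternKernel p a b = fun τ => cos (b * τ) *
      ((2 * a) ^ (2 * p + 1) / (2 * p)! * autocorrelation volume (maternFeature p a) τ) :=
    funext fun τ => by rw [hidaMaternKernel, maternKernel_eq_mul_autocorrelation ha]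
  rw [hk]
  exact ((isPosDefFun_autocorrelation volume (memLp_maternFeature ha)).const_mul
    (by positivity)).cos_mul b
end

section
/- Let p ∈ ℕ and a > 0 be fixed. For every even square-integrable function f ∈ L²(ℝ, ℝ) (i.e. f(−τ) = f(τ) almost everywhere) and every ε > 0, there exist L ∈ ℕ, real coefficients c₁, …, c_L, and frequencies b₁, …, b_L ∈ ℝ such that ‖ f − Σ_{i=1}^{L} c_i · k_{H,p}(·; a, b_i) ‖_{L²(ℝ)} < ε, where k_{H,p}(τ; a, b) = cos(bτ) · m_p(τ; a). That is, for any fixed p, the Hida-Matérn kernels are dense in the space of square-integrable stationary (even) kernels. -/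
/-!
The Matérn kernel `m` is continuous, positive, even and square-integrable. An even `g ∈ C_c(ℝ)`
(dense among even `L²` functions, by symmetrising) is `h · m` with `h = g / m` continuous, even and
bounded by some `C`. Put `ω = π / R`. On `[-R, R]` one has `h τ = h (arccos (cos ωτ) / ω)`, so a
Weierstrass polynomial in `cos ωτ` approximates `h` within `δ` there and is bounded by `C + δ` on all
of `ℝ`; by the product-to-sum formula it is a finite cosine sum. Multiplying by `m`, the `L²` error
is at most `δ ‖m‖ + (2C + δ) ‖m · 1_{|τ| > R}‖`, and the tail of `m` vanishes as `R → ∞`.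
-/

open MeasureTheory

open Real Set Filter Topology Polynomial Submodule
open scoped ENNReal

noncomputable section

def cosineSpan : Submodule ℝ (ℝ → ℝ) :=
  span ℝ (range fun b τ => cos (b * τ))

lemma cos_mul_mem_cosineSpan (b : ℝ) : (fun τ => cos (b * τ)) ∈ cosineSpan :=
  subset_span ⟨b, rfl⟩

lemma one_mem_cosineSpan : (1 : ℝ → ℝ) ∈ cosineSpan := by
  convert cos_mul_mem_cosineSpan 0
  simp

lemma mul_mem_cosineSpan {u v : ℝ → ℝ} (hu : u ∈ cosineSpan) (hv : v ∈ cosineSpan) :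
    u * v ∈ cosineSpan := by
  refine (span_mul_span ℝ _ _).le.trans (span_le.mpr ?_) (mul_mem_mul hu hv)
  rintro _ ⟨_, ⟨b, rfl⟩, _, ⟨b', rfl⟩, rfl⟩
  have product_to_sum : ((fun τ => cos (b * τ)) * fun τ => cos (b' * τ)) =
      (2⁻¹ : ℝ) • (fun τ => cos ((b + b') * τ)) + (2⁻¹ : ℝ) • fun τ => cos ((b - b') * τ) := by
    ext τ
    simp only [Pi.mul_apply, Pi.add_apply, Pi.smul_apply, smul_eq_mul, add_mul, sub_mul,
      cos_add, cos_sub]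
    ring
  simp only [SetLike.mem_coe]
  rw [product_to_sum]
  exact add_mem (smul_mem _ _ (cos_mul_mem_cosineSpan _)) (smul_mem _ _ (cos_mul_mem_cosineSpan _))

def cosineSubalgebra : Subalgebra ℝ (ℝ → ℝ) :=
  cosineSpan.toSubalgebra one_mem_cosineSpan fun _ _ => mul_mem_cosineSpan

lemma eval_cos_mem_cosineSpan (P : ℝ[X]) (ω : ℝ) :
    (fun τ => P.eval (cos (ω * τ))) ∈ cosineSpan := by
  have hle : Algebra.adjoin ℝ {fun τ => cos (ω * τ)} ≤ cosineSubalgebra :=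
    Algebra.adjoin_le (singleton_subset_iff.mpr (cos_mul_mem_cosineSpan ω))
  have h := hle (aeval_mem_adjoin_singleton ℝ (fun τ => cos (ω * τ)) (p := P))
  rw [cosineSubalgebra, mem_toSubalgebra] at h
  convert h using 1
  ext τ
  simp [aeval_fn_apply]

lemma exists_sum_eq_of_mem_cosineSpan {Q : ℝ → ℝ} (hQ : Q ∈ cosineSpan) :
    ∃ (n : ℕ) (c b : Fin n → ℝ), Q = fun τ => ∑ i, c i * cos (b i * τ) := by
  obtain ⟨n, c, v, rfl⟩ := mem_span_set'.mp hQ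
  choose b hb using fun i => (v i).2
  refine ⟨n, c, b, ?_⟩
  ext τ
  simp [← hb]

lemma Function.Even.comp_abs {β : Type*} {h : ℝ → β} (h_even : h.Even) (τ : ℝ) : h |τ| = h τ := by
  rcases abs_choice τ with hτ | hτ <;> simp [hτ, h_even.eq]

theorem exists_mem_cosineSpan_near {h : ℝ → ℝ} (h_cont : Continuous h) (h_even : h.Even)
    {C : ℝ} (hC : ∀ τ, |h τ| ≤ C) {R : ℝ} (hR : 0 < R) {δ : ℝ} (hδ : 0 < δ) :
    ∃ Q ∈ cosineSpan, (∀ τ, |τ| ≤ R → |Q τ - h τ| < δ) ∧ ∀ τ, |Q τ| ≤ C + δ := by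
  set ω := π / R
  have hω : 0 < ω := by positivity
  set φ : ℝ → ℝ := fun s => h (arccos s / ω)
  obtain ⟨P, hP⟩ := exists_polynomial_near_of_continuousOn (-1) 1 φ (by fun_prop) δ hδ
  have hcos : ∀ τ, cos (ω * τ) ∈ Icc (-1 : ℝ) 1 := fun τ => ⟨neg_one_le_cos _, cos_le_one _⟩
  refine ⟨fun τ => P.eval (cos (ω * τ)), eval_cos_mem_cosineSpan P ω, fun τ hτ => ?_, fun τ => ?_⟩
  · have hφ : φ (cos (ω * τ)) = h τ := by
      have hωτ : ω * |τ| ≤ π := by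
        calc ω * |τ| ≤ ω * R := by gcongr
          _ = π := div_mul_cancel₀ π hR.ne'
      simp only [φ]
      rw [← cos_abs, abs_mul, abs_of_pos hω, arccos_cos (by positivity) hωτ,
        mul_div_cancel_left₀ _ hω.ne', h_even.comp_abs]
    simpa [hφ] using hP _ (hcos τ)
  · have := hP _ (hcos τ)
    have := hC (arccos (cos (ω * τ)) / ω)
    have := abs_sub_abs_le_abs_sub (P.eval (cos (ω * τ))) (φ (cos (ω * τ)))
    simp only [φ] at *
    linarith

namespace MeasureTheory

variable {E : Type*} [NormedAddCommGroup E] [NormedSpace ℝ E] {p : ℝ≥0∞}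

theorem MemLp.exists_even_continuous_hasCompactSupport_eLpNorm_sub_le (hp1 : 1 ≤ p)
    (hp : p ≠ ∞) {f : ℝ → E} (hf : MemLp f p volume) (hf_even : ∀ᵐ τ, f (-τ) = f τ)
    {η : ℝ≥0∞} (hη : η ≠ 0) :
    ∃ g : ℝ → E, Continuous g ∧ HasCompactSupport g ∧ g.Even ∧ eLpNorm (f - g) p volume ≤ η := by
  obtain ⟨g, g_supp, hfg, g_cont, -⟩ := hf.exists_hasCompactSupport_eLpNorm_sub_le hp hη
  refine ⟨fun τ => (2 : ℝ)⁻¹ • (g τ + g (-τ)), by fun_prop, ?_, fun τ => by simp [add_comm], ?_⟩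
  · exact ((g_supp.add (g_supp.comp_homeomorph (Homeomorph.neg ℝ))).smul_left)
  set u := f - g
  have hu : AEStronglyMeasurable u volume := hf.1.sub g_cont.aestronglyMeasurable
  have hneg := Measure.measurePreserving_neg (volume : Measure ℝ)
  -- since `f` is even, the error of the symmetrised `g` averages those of `g` and of its reflection
  have hsym : f - (fun τ => (2 : ℝ)⁻¹ • (g τ + g (-τ))) =ᵐ[volume] (2 : ℝ)⁻¹ • (u + u ∘ Neg.neg) := by
    filter_upwards [hf_even] with τ hτ
    simp only [u, Pi.sub_apply, Pi.smul_apply, Pi.add_apply, Function.comp_apply, hτ]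
    module
  calc eLpNorm (f - fun τ => (2 : ℝ)⁻¹ • (g τ + g (-τ))) p volume
      = 2⁻¹ * eLpNorm (u + u ∘ Neg.neg) p volume := by
        rw [eLpNorm_congr_ae hsym, eLpNorm_const_smul, Real.enorm_of_nonneg (by norm_num),
          ENNReal.ofReal_inv_of_pos two_pos, ENNReal.ofReal_ofNat]
    _ ≤ 2⁻¹ * (eLpNorm u p volume + eLpNorm (u ∘ Neg.neg) p volume) := by
        gcongr
        exact eLpNorm_add_le hu (hu.comp_measurePreserving hneg) hp1
    _ = eLpNorm u p volume := by
        rw [eLpNorm_comp_measurePreserving hu hneg, ← two_mul, ← mul_assoc,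
          ENNReal.inv_mul_cancel two_ne_zero ENNReal.ofNat_ne_top, one_mul]
    _ ≤ η := hfg

theorem MemLp.tendsto_eLpNorm_indicator_abs_gt (hp : p ≠ ∞) {f : ℝ → E}
    (hf : MemLp f p volume) :
    Tendsto (fun R => eLpNorm ({τ | R < |τ|}.indicator f) p volume) atTop (𝓝 0) := by
  rw [ENNReal.tendsto_nhds_zero]
  intro η hη
  -- outside the support of a compactly supported approximation `g`, `f = f - g`
  obtain ⟨g, g_supp, hfg, -, -⟩ := hf.exists_hasCompactSupport_eLpNorm_sub_le hp hη.ne'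
  obtain ⟨r, hr⟩ := g_supp.isBounded.subset_closedBall 0
  filter_upwards [eventually_ge_atTop r] with R hR
  have : {τ | R < |τ|}.indicator f = {τ | R < |τ|}.indicator (f - g) := by
    refine indicator_congr fun τ hτ => ?_
    have : τ ∉ tsupport g := fun hτg => by
      have := hr hτg
      simp only [Metric.mem_closedBall, dist_zero_right, norm_eq_abs, mem_ofPred_eq] at this hτ
      linarith
    simp [image_eq_zero_of_notMem_tsupport this]
  rw [this]
  exact (MeasureTheory.eLpNorm_indicator_le _).trans hfg

theorem eLpNorm_mul_le_of_abs_le {α : Type*} [MeasurableSpace α] {μ : Measure α} (hp1 : 1 ≤ p)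
    {u m : α → ℝ} (hm : AEStronglyMeasurable m μ) {S : Set α} (hS : MeasurableSet S) {δ C : ℝ}
    (hδ : 0 ≤ δ) (hC : 0 ≤ C) (hu_S : ∀ x ∉ S, |u x| ≤ δ) (hu : ∀ x, |u x| ≤ C) :
    eLpNorm (u * m) p μ ≤
      ENNReal.ofReal δ * eLpNorm m p μ + ENNReal.ofReal C * eLpNorm (S.indicator m) p μ := by
  have hpt : ∀ x, ‖(u * m) x‖ ≤ (δ • (‖m ·‖) + C • (‖S.indicator m ·‖)) x := by
    intro x
    by_cases hx : x ∈ S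
    · simp only [Pi.mul_apply, Pi.add_apply, Pi.smul_apply, smul_eq_mul, norm_mul, norm_eq_abs,
        indicator_of_mem hx]
      nlinarith [hu x, abs_nonneg (m x), abs_nonneg (u x)]
    · simp only [Pi.mul_apply, Pi.add_apply, Pi.smul_apply, smul_eq_mul, norm_mul, norm_eq_abs,
        indicator_of_notMem hx, abs_zero, mul_zero, add_zero]
      exact mul_le_mul_of_nonneg_right (hu_S x hx) (abs_nonneg _)
  calc eLpNorm (u * m) p μ ≤ eLpNorm (δ • (‖m ·‖) + C • (‖S.indicator m ·‖)) p μ :=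
        eLpNorm_mono_real hpt
    _ ≤ eLpNorm (δ • (‖m ·‖)) p μ + eLpNorm (C • (‖S.indicator m ·‖)) p μ :=
        eLpNorm_add_le (hm.norm.const_smul δ) ((hm.indicator hS).norm.const_smul C) hp1
    _ = ENNReal.ofReal δ * eLpNorm m p μ + ENNReal.ofReal C * eLpNorm (S.indicator m) p μ := by
        rw [eLpNorm_const_smul, eLpNorm_const_smul, eLpNorm_norm, eLpNorm_norm,
          Real.enorm_of_nonneg hδ, Real.enorm_of_nonneg hC]

end MeasureTheory

lemma integrable_comp_abs_of_integrableOn_Ioi {E : Type*} [NormedAddCommGroup E] {φ : ℝ → E}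
    (hφ : IntegrableOn φ (Ioi 0)) : Integrable fun x => φ |x| := by
  have hIoi : IntegrableOn (fun x => φ |x|) (Ioi 0) :=
    hφ.congr_fun (fun x hx => by rw [abs_of_pos hx]) measurableSet_Ioi
  have hIic : IntegrableOn (fun x => φ |x|) (Iic 0) := by
    rw [← (Measure.measurePreserving_neg volume).integrableOn_comp_preimage
      (Homeomorph.neg ℝ).measurableEmbedding]
    simp only [Function.comp_def, abs_neg, neg_preimage, neg_Iic, neg_zero]
    exact Iff.mpr integrableOn_Ici_iff_integrableOn_Ioi hIoi
  rw [← integrableOn_univ, ← Iic_union_Ioi (a := (0 : ℝ))]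
  exact hIic.union hIoi

lemma integrable_abs_pow_mul_exp_neg_mul_abs (j : ℕ) {b : ℝ} (hb : 0 < b) :
    Integrable fun τ : ℝ => |τ| ^ j * exp (-b * |τ|) := by
  refine integrable_comp_abs_of_integrableOn_Ioi (φ := fun t => t ^ j * exp (-b * t)) ?_
  refine (integrableOn_rpow_mul_exp_neg_mul_rpow (s := j) (by linarith [j.cast_nonneg (α := ℝ)])
    one_pos hb).congr_fun (fun t _ => ?_) measurableSet_Ioi
  simp [rpow_natCast]

lemma memLp_abs_pow_mul_exp_neg_mul_abs (j : ℕ) {b : ℝ} (hb : 0 < b) :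
    MemLp (fun τ : ℝ => |τ| ^ j * exp (-b * |τ|)) 2 volume := by
  rw [memLp_two_iff_integrable_sq (by fun_prop)]
  refine (integrable_abs_pow_mul_exp_neg_mul_abs (2 * j) (by positivity : 0 < 2 * b)).congr
    (Eventually.of_forall fun τ => ?_)
  dsimp only
  rw [mul_pow, ← pow_mul, ← exp_nat_mul]
  ring_nf

@[fun_prop]
lemma continuous_maternKernel (p : ℕ) (a : ℝ) : Continuous (maternKernel p a) := by
  unfold maternKernel
  fun_prop

lemma maternKernel_even (p : ℕ) (a : ℝ) : (maternKernel p a).Even := by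
  intro τ
  simp [maternKernel]

lemma maternKernel_pos (p : ℕ) {a : ℝ} (ha : 0 < a) (τ : ℝ) : 0 < maternKernel p a τ := by
  unfold maternKernel
  refine mul_pos (by positivity) (Finset.sum_pos' (fun i _ => by positivity) ⟨p, by simp, ?_⟩)
  simp only [Nat.sub_self, pow_zero, mul_one]
  positivity

lemma memLp_maternKernel (p : ℕ) {a : ℝ} (ha : 0 < a) : MemLp (maternKernel p a) 2 volume := by
  have : maternKernel p a = fun τ => ∑ i ∈ Finset.range (p + 1),
      (p.factorial / (2 * p).factorial * ((p + i).factorial / (i.factorial * (p - i).factorial)) *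
        (2 * a) ^ (p - i) : ℝ) * (|τ| ^ (p - i) * exp (-a * |τ|)) := by
    ext τ
    simp only [maternKernel, Finset.mul_sum, mul_pow]
    exact Finset.sum_congr rfl fun i _ => by ring
  rw [this]
  exact memLp_finsetSum _ fun i _ => (memLp_abs_pow_mul_exp_neg_mul_abs _ ha).const_mul _

theorem exists_mem_cosineSpan_eLpNorm_sub_mul_le {p : ℝ≥0∞} (hp1 : 1 ≤ p) (hp : p ≠ ∞)
    {m : ℝ → ℝ} (hm : MemLp m p volume) (hm_cont : Continuous m) (hm_ne : ∀ τ, m τ ≠ 0)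
    (hm_even : m.Even) {g : ℝ → ℝ} (hg_cont : Continuous g) (hg_supp : HasCompactSupport g)
    (hg_even : g.Even) {η : ℝ≥0∞} (hη : η ≠ 0) :
    ∃ Q ∈ cosineSpan, eLpNorm (g - Q * m) p volume ≤ η := by
  set h := g / m
  have hg : g = h * m := by
    ext τ
    simp [h, div_mul_cancel₀ _ (hm_ne τ)]
  have h_cont : Continuous h := hg_cont.div hm_cont hm_ne
  have h_even : h.Even := fun τ => by simp [h, hg_even.eq, hm_even.eq]
  obtain ⟨C, hC⟩ := h_cont.bounded_above_of_compact_support (hg_supp.mul_right (f' := m⁻¹))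
  have hC0 : 0 ≤ C := (norm_nonneg _).trans (hC 0)
  have hη2 : η / 2 ≠ 0 := ENNReal.div_ne_zero.mpr ⟨hη, ENNReal.ofNat_ne_top⟩
  obtain ⟨δ, hδ, hδm⟩ := ENNReal.exists_nnreal_pos_mul_lt hm.eLpNorm_ne_top hη2
  set C' := 2 * C + δ
  obtain ⟨R, hR, hRtail⟩ : ∃ R : ℝ, 0 < R ∧
      ENNReal.ofReal C' * eLpNorm ({τ | R < |τ|}.indicator m) p volume ≤ η / 2 := by
    have := ENNReal.Tendsto.const_mul (a := ENNReal.ofReal C')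
      (hm.tendsto_eLpNorm_indicator_abs_gt hp) (.inr ENNReal.ofReal_ne_top)
    rw [mul_zero] at this
    exact ((this.eventually (ge_mem_nhds (pos_iff_ne_zero.mpr hη2))).and
      (eventually_gt_atTop 0)).exists.imp fun R hR => ⟨hR.2, hR.1⟩
  obtain ⟨Q, hQ, hQ_near, hQ_bdd⟩ :=
    exists_mem_cosineSpan_near h_cont h_even hC hR (δ := δ) hδ
  refine ⟨Q, hQ, ?_⟩
  calc eLpNorm (g - Q * m) p volume = eLpNorm ((h - Q) * m) p volume := by rw [hg, sub_mul]
    _ ≤ ENNReal.ofReal δ * eLpNorm m p volume +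
          ENNReal.ofReal C' * eLpNorm ({τ | R < |τ|}.indicator m) p volume := by
      refine eLpNorm_mul_le_of_abs_le hp1 hm_cont.aestronglyMeasurable
        (measurableSet_lt measurable_const measurable_abs) δ.2 (by positivity) (fun τ hτ => ?_)
        fun τ => ?_
      · rw [Pi.sub_apply, abs_sub_comm]
        exact (hQ_near τ (not_lt.mp hτ)).le
      · have := hC τ
        have := hQ_bdd τ
        have := abs_sub (h τ) (Q τ)
        simp only [Pi.sub_apply, norm_eq_abs, C'] at *
        linarith
    _ ≤ η / 2 + η / 2 := by
      gcongr
      simpa using hδm.le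
    _ = η := ENNReal.add_halves η

end

/-- Universality of the Hida-Matérn class: for fixed smoothness `p` and inverse
length-scale `a`, finite linear combinations of Hida-Matérn kernels are dense in
the space of square-integrable stationary (even) kernels. -/
theorem hidaMatern_universal (p : ℕ) (a : ℝ) (ha : 0 < a)
    (f : ℝ → ℝ) (hf : MemLp f 2 (volume : Measure ℝ))
    (hf_even : ∀ᵐ τ : ℝ ∂(volume : Measure ℝ), f (-τ) = f τ)
    (ε : ℝ) (hε : 0 < ε) :
    ∃ (L : ℕ) (c : Fin L → ℝ) (b : Fin L → ℝ),
      eLpNorm (fun τ : ℝ => f τ - ∑ i : Fin L, c i * hidaMaternKernel p a (b i) τ)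
        2 (volume : Measure ℝ) < ENNReal.ofReal ε := by
  have hη : ENNReal.ofReal (ε / 3) ≠ 0 := by positivity
  obtain ⟨g, hg_cont, hg_supp, hg_even, hfg⟩ :=
    hf.exists_even_continuous_hasCompactSupport_eLpNorm_sub_le one_le_two ENNReal.ofNat_ne_top
      hf_even hη
  obtain ⟨Q, hQ, hgQ⟩ := exists_mem_cosineSpan_eLpNorm_sub_mul_le one_le_two ENNReal.ofNat_ne_top
    (memLp_maternKernel p ha) (continuous_maternKernel p a) (fun τ => (maternKernel_pos p ha τ).ne')
    (maternKernel_even p a) hg_cont hg_supp hg_even hη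
  obtain ⟨L, c, b, rfl⟩ := exists_sum_eq_of_mem_cosineSpan hQ
  refine ⟨L, c, b, ?_⟩
  have hsplit : (fun τ => f τ - ∑ i, c i * hidaMaternKernel p a (b i) τ) =
      (f - g) + (g - (fun τ => ∑ i, c i * cos (b i * τ)) * maternKernel p a) := by
    ext τ
    simp [hidaMaternKernel, Finset.sum_mul, mul_assoc]
  calc eLpNorm (fun τ => f τ - ∑ i, c i * hidaMaternKernel p a (b i) τ) 2 volume
      ≤ ENNReal.ofReal (ε / 3) + ENNReal.ofReal (ε / 3) := by
        rw [hsplit]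
        exact (eLpNorm_add_le (hf.1.sub hg_cont.aestronglyMeasurable)
          (by fun_prop : Continuous _).aestronglyMeasurable one_le_two).trans (add_le_add hfg hgQ)
    _ < ENNReal.ofReal ε := by
        rw [← ENNReal.ofReal_add (by positivity) (by positivity)]
        exact (ENNReal.ofReal_lt_ofReal_iff hε).mpr (by linarith)
end

section
/- Let N = M + (N − M) and let K⁰ be a symmetric positive-definite real N×N matrix and K a real N×N matrix, partitioned conformally into blocks K⁰ = [[K⁰₀₀, K⁰₀₁], [K⁰₀₁ᵀ, K⁰₁₁]] and K = [[K₀₀, K₀₁], [K₁₀, K₁₁]] with K⁰₀₀, K₀₀ of size M×M. Define A = K (K⁰)⁻¹ with blocks [[A₀₀, A₀₁], [A₁₀, A₁₁]], Q = K⁰ − K (K⁰)⁻¹ Kᵀ with top-left block Q₀₀, and the Schur complement S = K⁰₁₁ − K⁰₀₁ᵀ (K⁰₀₀)⁻¹ K⁰₀₁ (which is invertible). Then the one-step marginalized transition matrix and noise covariance satisfy: (i) A₀₀ + A₀₁ K⁰₀₁ᵀ (K⁰₀₀)⁻¹ = K₀₀ (K⁰₀₀)⁻¹, and (ii) Q₀₀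 + A₀₁ S A₀₁ᵀ = K⁰₀₀ − K₀₀ (K⁰₀₀)⁻¹ K₀₀ᵀ. -/
/-!
Everything follows from `A K⁰ = K`, read off in the first block row:
`K₀₀ = A₀₀ K⁰₀₀ + A₀₁ K⁰₀₁ᵀ` and `K₀₁ = A₀₀ K⁰₀₁ + A₀₁ K⁰₁₁`. Multiplying the first identity by
`(K⁰₀₀)⁻¹` gives (i). Since `K⁰` is symmetric, `Q = K⁰ - K Aᵀ`, so
`Q₀₀ = K⁰₀₀ - K₀₀ A₀₀ᵀ - K₀₁ A₀₁ᵀ`, and completing the square in the quadratic form of `K⁰`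
with respect to its Schur complement `S` turns `K₀₀ A₀₀ᵀ + K₀₁ A₀₁ᵀ` into
`K₀₀ (K⁰₀₀)⁻¹ K₀₀ᵀ + A₀₁ S A₀₁ᵀ`, which is (ii).
-/

open Matrix

namespace Matrix

variable {R : Type*} {l m n o p q : Type*}

theorem toBlocks₁₁_sub [Sub R] (X Y : Matrix (l ⊕ m) (n ⊕ o) R) :
    (X - Y).toBlocks₁₁ = X.toBlocks₁₁ - Y.toBlocks₁₁ :=
  rfl

theorem toBlocks₁₁_transpose (X : Matrix (l ⊕ m) (n ⊕ o) R) : Xᵀ.toBlocks₁₁ = X.toBlocks₁₁ᵀ :=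
  rfl

theorem toBlocks₂₁_transpose (X : Matrix (l ⊕ m) (n ⊕ o) R) : Xᵀ.toBlocks₂₁ = X.toBlocks₁₂ᵀ :=
  rfl

variable [Fintype n] [Fintype o]

theorem toBlocks₁₁_mul [NonUnitalNonAssocSemiring R] (X : Matrix (l ⊕ m) (n ⊕ o) R)
    (Y : Matrix (n ⊕ o) (p ⊕ q) R) :
    (X * Y).toBlocks₁₁ = X.toBlocks₁₁ * Y.toBlocks₁₁ + X.toBlocks₁₂ * Y.toBlocks₂₁ := by
  conv_lhs => rw [← fromBlocks_toBlocks X, ← fromBlocks_toBlocks Y]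
  rw [fromBlocks_multiply, toBlocks_fromBlocks₁₁]

theorem toBlocks₁₂_mul [NonUnitalNonAssocSemiring R] (X : Matrix (l ⊕ m) (n ⊕ o) R)
    (Y : Matrix (n ⊕ o) (p ⊕ q) R) :
    (X * Y).toBlocks₁₂ = X.toBlocks₁₁ * Y.toBlocks₁₂ + X.toBlocks₁₂ * Y.toBlocks₂₂ := by
  conv_lhs => rw [← fromBlocks_toBlocks X, ← fromBlocks_toBlocks Y]
  rw [fromBlocks_multiply, toBlocks_fromBlocks₁₂]

/-- Completing the square in `[X Y] [[P, B], [Bᵀ, D]] [X Y]ᵀ` with respect to the Schur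
complement `D - Bᵀ P⁻¹ B`. -/
theorem mul_transpose_add_eq_schur [DecidableEq n] [CommRing R] {P : Matrix n n R}
    (hP : IsUnit P.det) (hPt : Pᵀ = P) (B : Matrix n o R) (D : Matrix o o R)
    (X : Matrix l n R) (Y : Matrix l o R) :
    (X * P + Y * Bᵀ) * Xᵀ + (X * B + Y * D) * Yᵀ
      = (X * P + Y * Bᵀ) * P⁻¹ * (X * P + Y * Bᵀ)ᵀ + Y * (D - Bᵀ * P⁻¹ * B) * Yᵀ := by
  have hright : (X * P + Y * Bᵀ) * P⁻¹ = X + Y * Bᵀ * P⁻¹ := by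
    rw [Matrix.add_mul, mul_nonsing_inv_cancel_right _ _ hP]
  have htranspose : (X * P + Y * Bᵀ)ᵀ = P * Xᵀ + B * Yᵀ := by
    rw [transpose_add, transpose_mul, transpose_mul, hPt, transpose_transpose]
  rw [hright, htranspose]
  simp only [Matrix.add_mul, Matrix.mul_add, Matrix.sub_mul, Matrix.mul_sub, Matrix.mul_assoc,
    nonsing_inv_mul_cancel_left _ _ hP]
  abel

end Matrix

/-- One-step marginalization of the higher-order block of an `N`-ple Markov state-space
model depends only on the `K₀₀` block: the marginalized transition matrix equals
`K₀₀ (K⁰₀₀)⁻¹` and the marginalized noise covariance equals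
`K⁰₀₀ − K₀₀ (K⁰₀₀)⁻¹ K₀₀ᵀ`. -/
theorem naive_marginalization (M M' : ℕ)
    (K000 : Matrix (Fin M) (Fin M) ℝ) (K001 : Matrix (Fin M) (Fin M') ℝ)
    (K011 : Matrix (Fin M') (Fin M') ℝ)
    (K00 : Matrix (Fin M) (Fin M) ℝ) (K01 : Matrix (Fin M) (Fin M') ℝ)
    (K10 : Matrix (Fin M') (Fin M) ℝ) (K11 : Matrix (Fin M') (Fin M') ℝ)
    (K0 K : Matrix (Fin M ⊕ Fin M') (Fin M ⊕ Fin M') ℝ)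
    (hK0 : K0 = Matrix.fromBlocks K000 K001 K001ᵀ K011)
    (hK : K = Matrix.fromBlocks K00 K01 K10 K11)
    (hK0posdef : K0.PosDef)
    (A Q : Matrix (Fin M ⊕ Fin M') (Fin M ⊕ Fin M') ℝ)
    (hA : A = K * K0⁻¹)
    (hQ : Q = K0 - K * K0⁻¹ * Kᵀ)
    (S : Matrix (Fin M') (Fin M') ℝ)
    (hS : S = K011 - K001ᵀ * K000⁻¹ * K001) :
    (A.toBlocks₁₁ + A.toBlocks₁₂ * K001ᵀ * K000⁻¹ = K00 * K000⁻¹) ∧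
    (Q.toBlocks₁₁ + A.toBlocks₁₂ * S * (A.toBlocks₁₂)ᵀ
      = K000 - K00 * K000⁻¹ * K00ᵀ) := by
  have hK0symm : K0ᵀ = K0 := hK0posdef.isHermitian
  have hK000symm : K000ᵀ = K000 := (isSymm_fromBlocks_iff.mp (hK0 ▸ hK0symm)).1
  have hK000posdef : K000.PosDef := by
    subst hK0; exact hK0posdef.submatrix Sum.inl_injective
  have hK000unit : IsUnit K000.det := hK000posdef.det_pos.ne'.isUnit
  have hAK0 : A * K0 = K := by
    rw [hA, nonsing_inv_mul_cancel_right _ _ hK0posdef.det_pos.ne'.isUnit]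
  have hQ' : Q = K0 - K * Aᵀ := by
    rw [hQ, hA, transpose_mul, transpose_nonsing_inv, hK0symm, Matrix.mul_assoc]
  have hK00 : A.toBlocks₁₁ * K000 + A.toBlocks₁₂ * K001ᵀ = K00 := by
    simpa [hK0, hK, toBlocks₁₁_mul] using congr_arg toBlocks₁₁ hAK0
  have hK01 : A.toBlocks₁₁ * K001 + A.toBlocks₁₂ * K011 = K01 := by
    simpa [hK0, hK, toBlocks₁₂_mul] using congr_arg toBlocks₁₂ hAK0
  have hQ00 : Q.toBlocks₁₁ = K000 - (K00 * A.toBlocks₁₁ᵀ + K01 * A.toBlocks₁₂ᵀ) := by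
    rw [hQ', toBlocks₁₁_sub, toBlocks₁₁_mul, toBlocks₁₁_transpose, toBlocks₂₁_transpose, hK0, hK,
      toBlocks_fromBlocks₁₁, toBlocks_fromBlocks₁₁, toBlocks_fromBlocks₁₂]
  have hsquare :=
    mul_transpose_add_eq_schur hK000unit hK000symm K001 K011 A.toBlocks₁₁ A.toBlocks₁₂
  rw [hK00, hK01] at hsquare
  constructor
  · rw [← hK00, Matrix.add_mul, mul_nonsing_inv_cancel_right _ _ hK000unit]
  · rw [hQ00, hS, hsquare]
    abel
end

section
/- Let a > 0 and define k(τ) = (1 + aτ) e^{−aτ} (the Matérn 3/2 kernel on τ ≥ 0) and the 2×2 multi-output kernel matrix K^S(τ) with entries K^S(τ)_{ij} = (−1)^j k^{(i+j)}(τ) for i, j ∈ {0, 1}; explicitly K^S(τ) = [[(1 + aτ)e^{−aτ}, a²τ e^{−aτ}], [−a²τ e^{−aτ}, a²(1 − aτ)e^{−aτ}]] and K^S(0) = diag(1, a²). Then the transition matrices A(τ) = K^S(τ) K^S(0)⁻¹ form a semigroup on τ ≥ 0: for all τ, σ ≥ 0, K^S(τ + σ) K^S(0)⁻¹ = (K^S(τ)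 K^S(0)⁻¹)(K^S(σ) K^S(0)⁻¹). -/
open Matrix Real

/-- The multi-output kernel matrix `K^S(τ)` of the state vector `(f, f')` for the
Matérn 3/2 kernel `k(τ) = (1 + aτ)e^{−aτ}`. -/
noncomputable def KS (a τ : ℝ) : Matrix (Fin 2) (Fin 2) ℝ :=
  !![(1 + a * τ) * Real.exp (-a * τ), a ^ 2 * τ * Real.exp (-a * τ);
     -(a ^ 2 * τ * Real.exp (-a * τ)), a ^ 2 * (1 - a * τ) * Real.exp (-a * τ)]

/-!
With `F = !![a, 1; -a², -a]` one has `K^S(τ) K^S(0)⁻¹ = e^{-aτ} (1 + τ F)`, i.e. the transition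
matrix is `exp (τ (F - a))`. Since `F² = 0`, `(1 + τ F)(1 + σ F) = 1 + (τ + σ) F`, and the
semigroup law follows from `e^{-a(τ+σ)} = e^{-aτ} e^{-aσ}`.
-/

theorem one_add_smul_mul_one_add_smul_of_mul_self_eq_zero {R A : Type*} [CommSemiring R]
    [Semiring A] [Algebra R A] {x : A} (hx : x * x = 0) (s t : R) :
    (1 + s • x) * (1 + t • x) = 1 + (s + t) • x := by
  simp only [mul_add, add_mul, one_mul, mul_one, smul_mul_smul_comm, hx, smul_zero, add_zero,
    add_smul, add_assoc]

def matern32Nilpotent (a : ℝ) : Matrix (Fin 2) (Fin 2) ℝ :=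
  !![a, 1; -a ^ 2, -a]

theorem matern32Nilpotent_mul_self (a : ℝ) : matern32Nilpotent a * matern32Nilpotent a = 0 := by
  ext i j
  fin_cases i <;> fin_cases j <;> simp [matern32Nilpotent] <;> ring

theorem KS_zero_inv {a : ℝ} (ha : a ≠ 0) : (KS a 0)⁻¹ = !![1, 0; 0, (a ^ 2)⁻¹] := by
  refine inv_eq_right_inv ?_
  simp [KS, ha, ← Matrix.one_fin_two]

theorem KS_mul_KS_zero_inv {a : ℝ} (ha : a ≠ 0) (τ : ℝ) :
    KS a τ * (KS a 0)⁻¹ = exp (-a * τ) • (1 + τ • matern32Nilpotent a) := by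
  rw [KS_zero_inv ha]
  ext i j
  fin_cases i <;> fin_cases j <;> simp [KS, matern32Nilpotent, sub_eq_add_neg] <;> field_simp

/-- The transition matrices `A(τ) = K^S(τ) K^S(0)⁻¹` of the Matérn 3/2 state-space
model form a semigroup on `τ ≥ 0`. -/
theorem matern32_transition_semigroup (a : ℝ) (ha : 0 < a) :
    ∀ τ σ : ℝ, 0 ≤ τ → 0 ≤ σ →
      KS a (τ + σ) * (KS a 0)⁻¹
        = (KS a τ * (KS a 0)⁻¹) * (KS a σ * (KS a 0)⁻¹) := by
  intro τ σ _ _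
  simp only [KS_mul_KS_zero_inv ha.ne', smul_mul_smul_comm,
    one_add_smul_mul_one_add_smul_of_mul_self_eq_zero (matern32Nilpotent_mul_self a), mul_add,
    exp_add]
end

section
/- Let σ > 0, ℓ > 0, ω₀ ∈ ℝ. Then for every τ ∈ ℝ, the periodic kernel admits the absolutely convergent cosine-series expansion σ² exp( (cos(ω₀τ) − 1) / ℓ² ) = σ² e^{−1/ℓ²} Σ_{q=0}^{∞} (1 / (q! ℓ^{2q} 2^q)) Σ_{v=0}^{q} C(q, v) cos( ω₀ (q − 2v) τ ). -/
/-!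
Writing `2 cos θ = e^{iθ} + e^{-iθ}` and expanding binomially gives
`(2 cos θ)^q = Σ_v C(q,v) cos((q - 2v) θ)`, so the `q`-th term of the series is
`σ² e^{-1/ℓ²} (cos θ / ℓ²)^q / q!` and the series is the exponential series of `cos θ / ℓ²`.
-/

open Real Finset

theorem Complex.two_mul_cos_pow (θ : ℂ) (q : ℕ) :
    (2 * Complex.cos θ) ^ q =
      ∑ v ∈ range (q + 1), (q.choose v : ℂ) * Complex.exp (((q : ℂ) - 2 * v) * θ * Complex.I) := by
  rw [Complex.two_cos, add_comm, add_pow]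
  refine sum_congr rfl fun v hv => ?_
  have hvq : v ≤ q := Nat.lt_succ_iff.mp (mem_range.mp hv)
  rw [← Complex.exp_nat_mul, ← Complex.exp_nat_mul, ← Complex.exp_add, Nat.cast_sub hvq, mul_comm]
  ring_nf

theorem Real.sum_choose_mul_cos_eq_two_mul_cos_pow (θ : ℝ) (q : ℕ) :
    ∑ v ∈ range (q + 1), (q.choose v : ℝ) * cos (((q : ℝ) - 2 * v) * θ) = (2 * cos θ) ^ q := by
  calc ∑ v ∈ range (q + 1), (q.choose v : ℝ) * cos (((q : ℝ) - 2 * v) * θ)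
      = ∑ v ∈ range (q + 1),
          ((q.choose v : ℂ) * Complex.exp (((q : ℂ) - 2 * v) * θ * Complex.I)).re := by
        refine sum_congr rfl fun v _ => ?_
        rw [← Complex.ofReal_natCast (q.choose v), Complex.re_ofReal_mul]
        exact_mod_cast congrArg _ (Complex.exp_ofReal_mul_I_re (((q : ℝ) - 2 * v) * θ)).symm
    _ = ((2 * Complex.cos θ) ^ q).re := by rw [Complex.two_mul_cos_pow, Complex.re_sum]
    _ = (2 * cos θ) ^ q := by norm_cast

theorem Real.hasSum_pow_div_factorial (x : ℝ) :
    HasSum (fun q : ℕ => x ^ q / q.factorial) (exp x) := by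
  rw [exp_eq_exp_ℝ]
  exact NormedSpace.expSeries_div_hasSum_exp x

theorem periodic_kernel_cosine_series_general (σ ℓ ω₀ : ℝ) (τ : ℝ) :
    HasSum
      (fun q : ℕ =>
        σ ^ 2 * Real.exp (-(1 / ℓ ^ 2)) *
          (1 / ((q.factorial : ℝ) * ℓ ^ (2 * q) * 2 ^ q)) *
            ∑ v ∈ Finset.range (q + 1),
              (q.choose v : ℝ) * Real.cos (ω₀ * ((q : ℝ) - 2 * v) * τ))
      (σ ^ 2 * Real.exp ((Real.cos (ω₀ * τ) - 1) / ℓ ^ 2)) := by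
  have hcos (q : ℕ) : ∑ v ∈ range (q + 1), (q.choose v : ℝ) * cos (ω₀ * ((q : ℝ) - 2 * v) * τ)
      = (2 * cos (ω₀ * τ)) ^ q := by
    rw [← sum_choose_mul_cos_eq_two_mul_cos_pow]
    exact sum_congr rfl fun v _ => by ring_nf
  have hterm (q : ℕ) : 1 / ((q.factorial : ℝ) * ℓ ^ (2 * q) * 2 ^ q) * (2 * cos (ω₀ * τ)) ^ q
      = (cos (ω₀ * τ) / ℓ ^ 2) ^ q / q.factorial := by
    rw [mul_pow, div_pow, pow_mul]
    field_simp
  have hexp : exp (-(1 / ℓ ^ 2)) * exp (cos (ω₀ * τ) / ℓ ^ 2)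
      = exp ((cos (ω₀ * τ) - 1) / ℓ ^ 2) := by
    rw [← exp_add, sub_div]
    ring_nf
  rw [← hexp, ← mul_assoc]
  convert (hasSum_pow_div_factorial (cos (ω₀ * τ) / ℓ ^ 2)).mul_left (σ ^ 2 * exp (-(1 / ℓ ^ 2)))
    using 2 with q
  · rfl
  · rw [hcos, mul_assoc, hterm]

/-- The periodic kernel `σ² exp((cos(ω₀τ) − 1)/ℓ²)` admits an absolutely convergent
cosine-series expansion. -/
theorem periodic_kernel_cosine_series (σ ℓ ω₀ : ℝ) (hσ : 0 < σ) (hℓ : 0 < ℓ) (τ : ℝ) :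
    HasSum
      (fun q : ℕ =>
        σ ^ 2 * Real.exp (-(1 / ℓ ^ 2)) *
          (1 / ((q.factorial : ℝ) * ℓ ^ (2 * q) * 2 ^ q)) *
            ∑ v ∈ Finset.range (q + 1),
              (q.choose v : ℝ) * Real.cos (ω₀ * ((q : ℝ) - 2 * v) * τ))
      (σ ^ 2 * Real.exp ((Real.cos (ω₀ * τ) - 1) / ℓ ^ 2)) :=
  periodic_kernel_cosine_series_general σ ℓ ω₀ τ
end

section
/- Let ℓ > 0 and τ ∈ ℝ be fixed, and for each p ∈ ℕ set a_p = √(2p + 1) / ℓ. Then the Matérn kernels of half-integer order converge pointwise to the squared-exponential kernel: lim_{p → ∞} m_p(τ; a_p) = exp( −τ² / (2ℓ²) ), where m_p(τ; a) = e^{−a|τ|} · (p!/(2p)!) · Σ_{i=0}^{p} ((p+i)!/(i!(p−i)!)) (2a|τ|)^{p−i}. -/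
/-!
Substituting `v ↦ v + x` in the Gamma integrals `∫_x^∞ (v - x)^k e^{-v} dv = e^{-x} k!` and
expanding binomially gives, with `x = a|τ|`,
`m_p(τ; a) = (1/(2p)!) ∫_x^∞ (v² - x²)^p e^{-v} dv`,
the mean of `(1 - x²/V²)₊^p` for `V` following the Gamma law `V^{2p} e^{-V}/(2p)!`, whose
mean and variance both equal `N = 2p + 1`. For `a = a_p` we have `x² = t² N` with `t = |τ|/ℓ`.
On the window `|V - N| ≤ δN` the integrand lies between the values
`(1 - t²/((1 ∓ δ)² N))^p → e^{-t²/2}` at its edges, and Chebyshev's inequality bounds the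
mass outside the window by `1/(δ² N)`. Taking `δ = N^{-1/4}` makes both errors vanish.
-/

open Real Filter Topology

open MeasureTheory Set
open scoped Nat

lemma integrableOn_pow_mul_exp_neg (m : ℕ) :
    IntegrableOn (fun v : ℝ => v ^ m * exp (-v)) (Ioi 0) := by
  refine (GammaIntegral_convergent (s := m + 1) (by positivity)).congr_fun
    (fun v _ => ?_) measurableSet_Ioi
  simp [mul_comm]

lemma integral_pow_mul_exp_neg (m : ℕ) : ∫ v in Ioi (0 : ℝ), v ^ m * exp (-v) = m ! := by
  rw [← Gamma_nat_eq_factorial, Gamma_eq_integral (by positivity)]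
  refine setIntegral_congr_fun measurableSet_Ioi (fun v _ => ?_)
  simp [mul_comm]

lemma sub_pow_mul_exp_neg_add (m : ℕ) (x u : ℝ) :
    (u + x - x) ^ m * exp (-(u + x)) = exp (-x) * (u ^ m * exp (-u)) := by
  rw [add_sub_cancel_right, neg_add, exp_add]; ring

lemma integrableOn_sub_pow_mul_exp_neg (m : ℕ) (x : ℝ) :
    IntegrableOn (fun v : ℝ => (v - x) ^ m * exp (-v)) (Ioi x) := by
  rw [← (measurePreserving_add_right volume x).integrableOn_comp_preimage
    (measurableEmbedding_addRight x), preimage_add_const_Ioi, sub_self]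
  simp only [Function.comp_def, sub_pow_mul_exp_neg_add]
  exact (integrableOn_pow_mul_exp_neg m).const_mul (exp (-x))

lemma integral_sub_pow_mul_exp_neg (m : ℕ) (x : ℝ) :
    ∫ v in Ioi x, (v - x) ^ m * exp (-v) = exp (-x) * m ! := by
  rw [← (measurePreserving_add_right volume x).setIntegral_preimage_emb
    (measurableEmbedding_addRight x), preimage_add_const_Ioi, sub_self]
  simp only [sub_pow_mul_exp_neg_add, integral_const_mul, integral_pow_mul_exp_neg]

lemma sq_sub_sq_pow_mul_exp_neg_eq_sum (p : ℕ) (x v : ℝ) :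
    (v ^ 2 - x ^ 2) ^ p * exp (-v) = ∑ k ∈ Finset.range (p + 1),
      p.choose k * (2 * x) ^ (p - k) * ((v - x) ^ (p + k) * exp (-v)) := by
  rw [show v ^ 2 - x ^ 2 = (v - x) * ((v - x) + 2 * x) by ring, mul_pow, add_pow,
    Finset.mul_sum, Finset.sum_mul]
  exact Finset.sum_congr rfl fun k _ => by ring

lemma integrableOn_sq_sub_sq_pow_mul_exp_neg (p : ℕ) (x : ℝ) :
    IntegrableOn (fun v : ℝ => (v ^ 2 - x ^ 2) ^ p * exp (-v)) (Ioi x) := by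
  simp_rw [sq_sub_sq_pow_mul_exp_neg_eq_sum]
  exact integrable_finsetSum _ fun k _ => (integrableOn_sub_pow_mul_exp_neg (p + k) x).const_mul _

lemma maternKernel_eq_integral (p : ℕ) (a τ : ℝ) :
    maternKernel p a τ =
      (∫ v in Ioi (a * |τ|), (v ^ 2 - (a * |τ|) ^ 2) ^ p * exp (-v)) / (2 * p)! := by
  set x := a * |τ|
  simp_rw [sq_sub_sq_pow_mul_exp_neg_eq_sum]
  rw [integral_finsetSum _ fun k _ => (integrableOn_sub_pow_mul_exp_neg (p + k) x).const_mul _]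
  simp only [integral_const_mul, integral_sub_pow_mul_exp_neg, maternKernel, Finset.sum_div,
    Finset.mul_sum]
  refine Finset.sum_congr rfl fun k hk => ?_
  rw [Nat.cast_choose ℝ (Finset.mem_range_succ_iff.mp hk)]
  field_simp
  simp only [x]
  ring

section Window

variable {x w N v : ℝ}

lemma one_sub_div_sq_mem_Icc (hx : 0 ≤ x) (hxw : x ≤ w) : 1 - (x / w) ^ 2 ∈ Icc 0 1 := by
  have : x / w ≤ 1 := div_le_one_of_le₀ hxw (hx.trans hxw)
  constructor <;> nlinarith [div_nonneg hx (hx.trans hxw)]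

lemma one_le_sub_sq_div_sub_sq (hvw : |w - N| ≤ |v - N|) (hwN : w ≠ N) :
    1 ≤ (v - N) ^ 2 / (w - N) ^ 2 := by
  rw [one_le_div (by positivity), ← sq_abs, ← sq_abs (v - N)]
  exact pow_le_pow_left₀ (abs_nonneg _) hvw 2

/-- Below the window edge `w` the integrand is compared with its value at `w`; beyond it, the
Chebyshev weight `(v - N)² / (w - N)² ≥ 1` dominates it. -/
lemma indicator_sq_sub_sq_pow_le (p : ℕ) (hx : 0 ≤ x) (hxw : x ≤ w) (hNw : N < w) :
    (Ioi x).indicator (fun v => (v ^ 2 - x ^ 2) ^ p) v ≤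
      (1 - (x / w) ^ 2) ^ p * v ^ (2 * p) + v ^ (2 * p) * (v - N) ^ 2 / (w - N) ^ 2 := by
  obtain ⟨hH0, -⟩ := one_sub_div_sq_mem_Icc hx hxw
  have hvp : 0 ≤ v ^ (2 * p) := by rw [pow_mul]; positivity
  have htail : 0 ≤ v ^ (2 * p) * (v - N) ^ 2 / (w - N) ^ 2 := by positivity
  rcases le_or_gt v x with hvx | hxv
  · rw [indicator_of_notMem (notMem_Ioi.mpr hvx)]
    positivity
  rw [indicator_of_mem (mem_Ioi.mpr hxv)]
  rcases le_or_gt v w with hvw | hwv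
  · suffices (v ^ 2 - x ^ 2) ^ p ≤ ((1 - (x / w) ^ 2) * v ^ 2) ^ p by
      rw [mul_pow, ← pow_mul] at this; linarith
    refine pow_le_pow_left₀ (by nlinarith) ?_ p
    have hv : 0 ≤ v := hx.trans hxv.le
    have hxvw : x * v / w ≤ x := div_le_of_le_mul₀ (hv.trans hvw) hx (by nlinarith)
    have := pow_le_pow_left₀ (div_nonneg (mul_nonneg hx hv) (hv.trans hvw)) hxvw 2
    linear_combination this
  · have hv : 0 ≤ v := hx.trans hxv.le
    have hpow : (v ^ 2 - x ^ 2) ^ p ≤ v ^ (2 * p) := by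
      rw [pow_mul]; exact pow_le_pow_left₀ (by nlinarith) (by nlinarith) p
    have hdist : |w - N| ≤ |v - N| := by
      rw [abs_of_pos (sub_pos.mpr hNw), abs_of_pos (by linarith)]; linarith
    have hcheb := one_le_sub_sq_div_sub_sq hdist hNw.ne'
    have : v ^ (2 * p) ≤ v ^ (2 * p) * (v - N) ^ 2 / (w - N) ^ 2 := by
      rw [mul_div_assoc]; exact le_mul_of_one_le_right hvp hcheb
    nlinarith [mul_nonneg (pow_nonneg hH0 p) hvp]

lemma le_indicator_sq_sub_sq_pow (p : ℕ) (hx : 0 ≤ x) (hxw : x ≤ w) (hwN : w < N) :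
    (1 - (x / w) ^ 2) ^ p * v ^ (2 * p) - v ^ (2 * p) * (v - N) ^ 2 / (w - N) ^ 2 ≤
      (Ioi x).indicator (fun v => (v ^ 2 - x ^ 2) ^ p) v := by
  obtain ⟨hH0, hH1⟩ := one_sub_div_sq_mem_Icc hx hxw
  have hvp : 0 ≤ v ^ (2 * p) := by rw [pow_mul]; positivity
  rcases le_or_gt v w with hvw | hwv
  · have hind : 0 ≤ (Ioi x).indicator (fun v => (v ^ 2 - x ^ 2) ^ p) v :=
      indicator_nonneg (fun v hv => pow_nonneg (by nlinarith [mem_Ioi.mp hv]) p) v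
    have hdist : |w - N| ≤ |v - N| := by
      rw [abs_of_neg (sub_neg.mpr hwN), abs_of_neg (by linarith)]; linarith
    have hcheb := one_le_sub_sq_div_sub_sq hdist hwN.ne
    have : (1 - (x / w) ^ 2) ^ p * v ^ (2 * p) ≤ v ^ (2 * p) * (v - N) ^ 2 / (w - N) ^ 2 := by
      rw [mul_div_assoc]
      exact mul_le_mul_of_nonneg_right (pow_le_one₀ hH0 hH1) hvp |>.trans
        (by rw [one_mul]; exact le_mul_of_one_le_right hvp hcheb)
    linarith
  have hv : 0 ≤ v := (hx.trans hxw).trans hwv.le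
  rw [indicator_of_mem (mem_Ioi.mpr (hxw.trans_lt hwv))]
  suffices ((1 - (x / w) ^ 2) * v ^ 2) ^ p ≤ (v ^ 2 - x ^ 2) ^ p by
    rw [mul_pow, ← pow_mul] at this
    linarith [div_nonneg (mul_nonneg hvp (sq_nonneg (v - N))) (sq_nonneg (w - N))]
  refine pow_le_pow_left₀ (mul_nonneg hH0 (sq_nonneg v)) ?_ p
  have hxvw : x ≤ x / w * v := by
    calc x = x / w * w := (div_mul_cancel_of_imp fun hw => by linarith).symm
      _ ≤ x / w * v := mul_le_mul_of_nonneg_left hwv.le (div_nonneg hx (hx.trans hxw))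
  have := pow_le_pow_left₀ hx hxvw 2
  linear_combination this

end Window

lemma indicator_sq_sub_sq_pow_mul_exp_neg (p : ℕ) (x : ℝ) :
    (fun v => (Ioi x).indicator (fun v => (v ^ 2 - x ^ 2) ^ p) v * exp (-v)) =
      (Ioi x).indicator (fun v => (v ^ 2 - x ^ 2) ^ p * exp (-v)) :=
  funext fun _ => (indicator_mul_left (Ioi x) _ (fun v => exp (-v))).symm

lemma integrableOn_indicator_sq_sub_sq_pow_mul_exp_neg (p : ℕ) (x : ℝ) :
    IntegrableOn (fun v => (Ioi x).indicator (fun v => (v ^ 2 - x ^ 2) ^ p) v * exp (-v))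
      (Ioi 0) := by
  rw [indicator_sq_sub_sq_pow_mul_exp_neg, integrableOn_indicator_iff measurableSet_Ioi]
  exact (integrableOn_sq_sub_sq_pow_mul_exp_neg p x).mono_set inter_subset_left

lemma maternKernel_eq_integral_indicator (p : ℕ) {a τ : ℝ} (hx : 0 ≤ a * |τ|) :
    maternKernel p a τ = (∫ v in Ioi 0,
      (Ioi (a * |τ|)).indicator (fun v => (v ^ 2 - (a * |τ|) ^ 2) ^ p) v * exp (-v)) /
        (2 * p)! := by
  rw [indicator_sq_sub_sq_pow_mul_exp_neg, setIntegral_indicator measurableSet_Ioi, Ioi_inter_Ioi,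
    max_eq_right hx, maternKernel_eq_integral]

lemma quadratic_mul_exp_neg_eq (m : ℕ) (A B c v : ℝ) :
    (A * v ^ m + B * (v ^ m * (v - c) ^ 2)) * exp (-v) = (A + B * c ^ 2) * (v ^ m * exp (-v)) +
      -(2 * B * c) * (v ^ (m + 1) * exp (-v)) + B * (v ^ (m + 2) * exp (-v)) := by
  ring

lemma integrableOn_quadratic_mul_exp_neg (m : ℕ) (A B c : ℝ) :
    IntegrableOn (fun v : ℝ => (A * v ^ m + B * (v ^ m * (v - c) ^ 2)) * exp (-v)) (Ioi 0) := by
  simp_rw [quadratic_mul_exp_neg_eq]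
  exact (((integrableOn_pow_mul_exp_neg _).const_mul _).add
    ((integrableOn_pow_mul_exp_neg _).const_mul _)).add
    ((integrableOn_pow_mul_exp_neg _).const_mul _)

/-- The second-moment identity behind Chebyshev's inequality for the Gamma(m + 1, 1) law,
whose mean and variance are both `m + 1`. -/
lemma integral_quadratic_mul_exp_neg (m : ℕ) (A B : ℝ) :
    ∫ v in Ioi (0 : ℝ), (A * v ^ m + B * (v ^ m * (v - (m + 1)) ^ 2)) * exp (-v) =
      m ! * (A + B * (m + 1)) := by
  have hint (k : ℕ) (C : ℝ) :
      Integrable (fun v : ℝ => C * (v ^ k * exp (-v))) (volume.restrict (Ioi 0)) :=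
    (integrableOn_pow_mul_exp_neg k).const_mul C
  simp_rw [quadratic_mul_exp_neg_eq]
  rw [integral_add ((hint _ _).add (hint _ _) : Integrable (fun v : ℝ => _ + _) _) (hint _ _),
    integral_add (hint _ _) (hint _ _)]
  simp only [integral_const_mul, integral_pow_mul_exp_neg, Nat.factorial_succ]
  push_cast
  ring

section Bounds

variable (p : ℕ) {a τ w : ℝ}

lemma maternKernel_le (hx : 0 ≤ a * |τ|) (hxw : a * |τ| ≤ w) (hNw : 2 * p + 1 < w) :
    maternKernel p a τ ≤ (1 - (a * |τ| / w) ^ 2) ^ p + (2 * p + 1) / (w - (2 * p + 1)) ^ 2 := by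
  have hN : ((2 * p : ℕ) : ℝ) + 1 = 2 * p + 1 := by push_cast; ring
  calc maternKernel p a τ
      = (∫ v in Ioi 0, (Ioi (a * |τ|)).indicator (fun v => (v ^ 2 - (a * |τ|) ^ 2) ^ p) v *
          exp (-v)) / (2 * p)! := maternKernel_eq_integral_indicator p hx
    _ ≤ (∫ v in Ioi 0, ((1 - (a * |τ| / w) ^ 2) ^ p * v ^ (2 * p) +
          ((w - (2 * p + 1)) ^ 2)⁻¹ * (v ^ (2 * p) * (v - (2 * p + 1)) ^ 2)) * exp (-v)) /
          (2 * p)! := by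
        refine div_le_div_of_nonneg_right (setIntegral_mono_on ?_ ?_ measurableSet_Ioi
          fun v _ => ?_) (by positivity)
        · exact integrableOn_indicator_sq_sub_sq_pow_mul_exp_neg p _
        · rw [← hN]; exact integrableOn_quadratic_mul_exp_neg _ _ _ _
        · rw [← div_eq_inv_mul]
          exact mul_le_mul_of_nonneg_right (indicator_sq_sub_sq_pow_le p hx hxw hNw) (exp_pos _).le
    _ = _ := by
        rw [← hN, integral_quadratic_mul_exp_neg, hN]
        field_simp

lemma le_maternKernel (hx : 0 ≤ a * |τ|) (hxw : a * |τ| ≤ w) (hwN : w < 2 * p + 1) :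
    (1 - (a * |τ| / w) ^ 2) ^ p - (2 * p + 1) / (w - (2 * p + 1)) ^ 2 ≤ maternKernel p a τ := by
  have hN : ((2 * p : ℕ) : ℝ) + 1 = 2 * p + 1 := by push_cast; ring
  calc (1 - (a * |τ| / w) ^ 2) ^ p - (2 * p + 1) / (w - (2 * p + 1)) ^ 2
      = (∫ v in Ioi 0, ((1 - (a * |τ| / w) ^ 2) ^ p * v ^ (2 * p) +
          -((w - (2 * p + 1)) ^ 2)⁻¹ * (v ^ (2 * p) * (v - (2 * p + 1)) ^ 2)) * exp (-v)) /
          (2 * p)! := by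
        rw [← hN, integral_quadratic_mul_exp_neg, hN]
        field_simp
        ring
    _ ≤ (∫ v in Ioi 0, (Ioi (a * |τ|)).indicator (fun v => (v ^ 2 - (a * |τ|) ^ 2) ^ p) v *
          exp (-v)) / (2 * p)! := by
        refine div_le_div_of_nonneg_right (setIntegral_mono_on ?_ ?_ measurableSet_Ioi
          fun v _ => ?_) (by positivity)
        · rw [← hN]; exact integrableOn_quadratic_mul_exp_neg _ _ _ _
        · exact integrableOn_indicator_sq_sub_sq_pow_mul_exp_neg p _
        · rw [neg_mul, ← div_eq_inv_mul, ← sub_eq_add_neg]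
          exact mul_le_mul_of_nonneg_right (le_indicator_sq_sub_sq_pow p hx hxw hwN) (exp_pos _).le
    _ = maternKernel p a τ := (maternKernel_eq_integral_indicator p hx).symm

end Bounds

section Limits

lemma tendsto_two_mul_add_one_atTop : Tendsto (fun p : ℕ => (2 * p + 1 : ℝ)) atTop atTop :=
  tendsto_atTop_add_const_right _ _ (tendsto_natCast_atTop_atTop.const_mul_atTop two_pos)

variable {x c : ℕ → ℝ} {s : ℝ}

lemma tendsto_nat_mul_div_sq (hx : ∀ p : ℕ, x p ^ 2 = s * (2 * p + 1))
    (hc : Tendsto c atTop (𝓝 1)) :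
    Tendsto (fun p : ℕ => p * (x p / (c p * (2 * p + 1))) ^ 2) atTop (𝓝 (s / 2)) := by
  have hlim := ((tendsto_natCast_div_add_atTop (1 / 2 : ℝ)).const_mul (s / 2)).div (hc.pow 2)
    (by norm_num)
  rw [one_pow, mul_one, div_one] at hlim
  refine hlim.congr fun p => ?_
  rw [Pi.div_apply, div_pow, mul_pow, hx]
  field_simp

lemma tendsto_one_sub_div_sq_pow (hx : ∀ p : ℕ, x p ^ 2 = s * (2 * p + 1))
    (hc : Tendsto c atTop (𝓝 1)) :
    Tendsto (fun p : ℕ => (1 - (x p / (c p * (2 * p + 1))) ^ 2) ^ p) atTop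
      (𝓝 (exp (-(s / 2)))) := by
  simp_rw [sub_eq_add_neg]
  exact Real.tendsto_one_add_pow_exp_of_tendsto (by simpa using (tendsto_nat_mul_div_sq hx hc).neg)

lemma tendsto_div_sq_sub_mul
    (hcN : Tendsto (fun p : ℕ => (c p - 1) ^ 2 * (2 * p + 1)) atTop atTop) :
    Tendsto (fun p : ℕ => (2 * p + 1) / (c p * (2 * p + 1) - (2 * p + 1)) ^ 2) atTop
      (𝓝 0) := by
  refine (tendsto_inv_atTop_zero.comp hcN).congr fun p => ?_
  have : (2 * p + 1 : ℝ) ≠ 0 := by positivity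
  simp only [Function.comp_apply]
  field_simp

lemma eventually_le_mul (hx : ∀ p : ℕ, x p ^ 2 = s * (2 * p + 1))
    (hc : Tendsto c atTop (𝓝 1)) :
    ∀ᶠ p : ℕ in atTop, x p ≤ c p * (2 * p + 1) := by
  filter_upwards [((hc.pow 2).pos_mul_atTop (by norm_num) tendsto_two_mul_add_one_atTop)
      |>.eventually_ge_atTop s,
    hc.eventually (lt_mem_nhds zero_lt_one)] with p hs hc0
  refine (le_abs_self _).trans (abs_le_of_sq_le_sq ?_ (by positivity))
  have := mul_le_mul_of_nonneg_right hs (by positivity : (0 : ℝ) ≤ 2 * p + 1)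
  rw [hx]
  linear_combination this

end Limits

theorem tendsto_maternKernel_of_sq_eq {a : ℕ → ℝ} {τ s : ℝ} (ha : ∀ p, 0 ≤ a p)
    (hx : ∀ p : ℕ, (a p * |τ|) ^ 2 = s * (2 * p + 1)) :
    Tendsto (fun p => maternKernel p (a p) τ) atTop (𝓝 (exp (-(s / 2)))) := by
  -- window half-width `δ = N ^ (-1/4)`, so that `δ → 0` while `δ² N = √N → ∞`
  set δ : ℕ → ℝ := fun p => (2 * p + 1 : ℝ) ^ (-(1 / 4 : ℝ))
  have hδpos (p : ℕ) : 0 < δ p := by positivity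
  have hδ : Tendsto δ atTop (𝓝 0) :=
    (tendsto_rpow_neg_atTop (by norm_num)).comp tendsto_two_mul_add_one_atTop
  have hδN : Tendsto (fun p => δ p ^ 2 * (2 * p + 1)) atTop atTop := by
    refine ((tendsto_rpow_atTop (by norm_num : (0 : ℝ) < 1 / 2)).comp
      tendsto_two_mul_add_one_atTop).congr fun p => ?_
    have hN0 : (0 : ℝ) < 2 * p + 1 := by positivity
    simp only [δ, Function.comp_apply]
    rw [← rpow_natCast, ← rpow_mul hN0.le, ← rpow_add_one hN0.ne']
    norm_num
  clear_value δ
  have hwidth (c : ℕ → ℝ) (hc : ∀ p, (c p - 1) ^ 2 = δ p ^ 2) :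
      Tendsto (fun p => (c p - 1) ^ 2 * (2 * p + 1)) atTop atTop := by
    simpa only [hc] using hδN
  have hminus : Tendsto (fun p => 1 - δ p) atTop (𝓝 1) := by
    simpa using tendsto_const_nhds.sub hδ
  have hplus : Tendsto (fun p => 1 + δ p) atTop (𝓝 1) := by
    simpa using tendsto_const_nhds.add hδ
  have hlow := (tendsto_one_sub_div_sq_pow hx hminus).sub
    (tendsto_div_sq_sub_mul (hwidth (fun p => 1 - δ p) fun p => by ring))
  have hup := (tendsto_one_sub_div_sq_pow hx hplus).add
    (tendsto_div_sq_sub_mul (hwidth (fun p => 1 + δ p) fun p => by ring))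
  rw [sub_zero] at hlow
  rw [add_zero] at hup
  refine tendsto_of_tendsto_of_tendsto_of_le_of_le' hlow hup ?_ ?_
  · filter_upwards [eventually_le_mul hx hminus] with p hp
    exact le_maternKernel p (mul_nonneg (ha p) (abs_nonneg τ)) hp (by nlinarith [hδpos p])
  · filter_upwards [eventually_le_mul hx hplus] with p hp
    exact maternKernel_le p (mul_nonneg (ha p) (abs_nonneg τ)) hp (by nlinarith [hδpos p])

/-- The Matérn kernels of half-integer order with decay rate `√(2p+1)/ℓ` converge
pointwise to the squared-exponential kernel `exp(−τ²/(2ℓ²))` as `p → ∞`. -/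
theorem matern_tendsto_squared_exponential (ℓ : ℝ) (hℓ : 0 < ℓ) (τ : ℝ) :
    Filter.Tendsto
      (fun p : ℕ => maternKernel p (Real.sqrt (2 * p + 1) / ℓ) τ)
      Filter.atTop (nhds (Real.exp (-τ ^ 2 / (2 * ℓ ^ 2)))) := by
  have hlim := tendsto_maternKernel_of_sq_eq (s := (τ / ℓ) ^ 2) (τ := τ)
    (a := fun p : ℕ => Real.sqrt (2 * p + 1) / ℓ) (fun p => by positivity) fun p => by
      rw [mul_pow, div_pow, sq_sqrt (by positivity), sq_abs, div_pow]
      ring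
  convert hlim using 3
  field_simp
end
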